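/- For every integer p ≥ 1, the quantity ρ_p = 4π² · (2^{2p} - 1)/(2^{2(p+1)} - 1) · ζ(2p)/ζ(2p+2) satisfies ρ_p > π². -/

import Mathlib

/-!
Dirichlet's lambda function `λ(s) = ∑_{k ≥ 0} (2k+1)^{-s}` equals `(1 - 2^{-s}) ζ(s)`, so the
factors `2^{2p} - 1` and `2^{2p+2} - 1` cancel against the zeta values and
`ρ_p = π² λ(2p) / λ(2p+2)`. Each term `(2k+1)^{-s}` is non-increasing in `s` and strictly
decreasing for `k ≥ 1`, hence `λ(2p+2) < λ(2p)`.
-/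

open Real

/-- The Riemann zeta function for real `s > 1`, `ζ(s) = ∑_{n ≥ 1} n^{-s}`. -/
noncomputable def zetaR (s : ℝ) : ℝ := ∑' n : ℕ, 1 / (n + 1 : ℝ) ^ s

noncomputable def dirichletLambda (s : ℝ) : ℝ := ∑' k : ℕ, 1 / (2 * k + 1 : ℝ) ^ s

section

variable {s t : ℝ}

lemma summable_one_div_nat_add_one_rpow (hs : 1 < s) :
    Summable (fun n : ℕ => 1 / (n + 1 : ℝ) ^ s) := by
  simpa using (summable_nat_add_iff 1).mpr (Real.summable_one_div_nat_rpow.mpr hs)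

lemma summable_one_div_two_mul_add_one_rpow (hs : 1 < s) :
    Summable (fun k : ℕ => 1 / (2 * k + 1 : ℝ) ^ s) :=
  ((summable_one_div_nat_add_one_rpow hs).comp_injective
    (mul_right_injective₀ (two_ne_zero (α := ℕ)))).congr fun k => by simp

lemma dirichletLambda_pos (hs : 1 < s) : 0 < dirichletLambda s :=
  (summable_one_div_two_mul_add_one_rpow hs).tsum_pos (fun _ => by positivity) 0 (by simp)

lemma dirichletLambda_lt_of_lt (hs : 1 < s) (hst : s < t) :
    dirichletLambda t < dirichletLambda s := by
  refine Summable.tsum_lt_tsum (i := 1) (fun k => ?_) ?_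
    (summable_one_div_two_mul_add_one_rpow (hs.trans hst))
    (summable_one_div_two_mul_add_one_rpow hs)
  · have hk : (1 : ℝ) ≤ 2 * k + 1 := by linarith [k.cast_nonneg (α := ℝ)]
    gcongr
  · have h3 : (1 : ℝ) < 2 * (1 : ℕ) + 1 := by norm_num
    gcongr
    exact rpow_lt_rpow_of_exponent_lt h3 hst

-- Splitting `ζ(s)` into odd and even terms gives `ζ(s) = λ(s) + 2^{-s} ζ(s)`.
lemma two_rpow_sub_one_mul_zetaR (hs : 1 < s) :
    (2 ^ s - 1) * zetaR s = 2 ^ s * dirichletLambda s := by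
  have hζ := summable_one_div_nat_add_one_rpow hs
  have hodd : ∀ k : ℕ, 1 / ((2 * k + 1 : ℕ) + 1 : ℝ) ^ s = 2 ^ (-s) * (1 / (k + 1 : ℝ) ^ s) := by
    intro k
    rw [show ((2 * k + 1 : ℕ) + 1 : ℝ) = 2 * (k + 1) by push_cast; ring,
      mul_rpow (by norm_num) (by positivity), rpow_neg (by norm_num)]
    field_simp
  have hsplit := tsum_even_add_odd (f := fun n : ℕ => 1 / (n + 1 : ℝ) ^ s)
    (by simpa using summable_one_div_two_mul_add_one_rpow hs)
    (by simpa only [hodd] using hζ.mul_left _)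
  simp only [hodd, tsum_mul_left] at hsplit
  have heven : zetaR s = dirichletLambda s + 2 ^ (-s) * zetaR s := by
    simpa [dirichletLambda, zetaR] using hsplit.symm
  rw [rpow_neg (by norm_num)] at heven
  have h2 : (2 : ℝ) ^ s ≠ 0 := by positivity
  field_simp at heven
  linear_combination heven

lemma two_pow_sub_one_mul_zetaR_natCast {n : ℕ} (hn : 2 ≤ n) :
    (2 ^ n - 1) * zetaR n = 2 ^ n * dirichletLambda n := by
  simpa only [rpow_natCast] using two_rpow_sub_one_mul_zetaR (s := n) (by exact_mod_cast hn)

end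

lemma rho_eq_pi_sq_mul_dirichletLambda_div {p : ℕ} (hp : 1 ≤ p) :
    4 * π ^ 2 * (2 ^ (2 * p) - 1) / (2 ^ (2 * (p + 1)) - 1) *
        (zetaR (2 * p) / zetaR (2 * p + 2)) =
      π ^ 2 * (dirichletLambda (2 * p) / dirichletLambda (2 * p + 2)) := by
  have hA : (1 : ℝ) < 2 ^ (2 * p) := one_lt_pow₀ one_lt_two (by omega)
  have h1 := two_pow_sub_one_mul_zetaR_natCast (n := 2 * p) (by omega)
  have h2 := two_pow_sub_one_mul_zetaR_natCast (n := 2 * p + 2) (by omega)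
  have hpos := dirichletLambda_pos (s := 2 * p + 2) (by linarith [p.cast_nonneg (α := ℝ)])
  push_cast at h1 h2
  rw [pow_add] at h2
  rw [show 2 * (p + 1) = 2 * p + 2 by ring, pow_add,
    eq_div_of_mul_eq (by linarith) ((mul_comm _ _).trans h1),
    eq_div_of_mul_eq (by nlinarith) ((mul_comm _ _).trans h2)]
  have : (2 : ℝ) ^ (2 * p) - 1 ≠ 0 := by linarith
  have : (2 : ℝ) ^ (2 * p) * 2 ^ 2 - 1 ≠ 0 := by nlinarith
  field_simp
  ring

/-- For every integer `p ≥ 1`,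
`ρ_p = 4π² (2^{2p}-1)/(2^{2(p+1)}-1) · ζ(2p)/ζ(2p+2) > π²`. -/
theorem rho_gt_pi_sq (p : ℕ) (hp : 1 ≤ p) :
    π ^ 2 <
      4 * π ^ 2 * (2 ^ (2 * p) - 1) / (2 ^ (2 * (p + 1)) - 1) *
        (zetaR (2 * p) / zetaR (2 * p + 2)) := by
  have hs : (1 : ℝ) < 2 * p := by
    have : (1 : ℝ) ≤ p := by exact_mod_cast hp
    linarith
  rw [rho_eq_pi_sq_mul_dirichletLambda_div hp]
  refine lt_mul_of_one_lt_right (by positivity) ((one_lt_div ?_).2 ?_)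
  · exact dirichletLambda_pos (by linarith)
  · exact dirichletLambda_lt_of_lt hs (by linarith)
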